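/- Let x, x_1, x_2 be roots of unity in ℂ and let p_1, p_2, q be positive integers with (p_1, x_1) ≠ (1,1) and (q, x) ≠ (1,1). Then S_{p_1,p_2;q}(x_1,x_2;x) = −Li_{p_2,q,p_1}(x_2, x, x_1) − Li_{p_2+q,p_1}(x_2·x, x_1) + Li_{p_1}(x_1)·( Li_{p_2,q}(x_2, x) + Li_{p_2+q}(x_2·x) ). -/

import Mathlib

open Filter Finset

noncomputable def zf (n p : ℕ) (x : ℂ) : ℂ := ∑ k ∈ Icc 1 n, x ^ k / (k : ℂ) ^ p

noncomputable def Li (p : ℕ) (x : ℂ) : ℂ :=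
  limUnder atTop (fun N : ℕ => ∑ n ∈ Icc 1 N, x ^ n / (n : ℂ) ^ p)

noncomputable def phi (s x : ℂ) : ℂ :=
  limUnder atTop (fun N : ℕ => ∑ k ∈ range N, x ^ k / ((k : ℂ) + s))

noncomputable def Phi (s x : ℂ) : ℂ := phi s x - phi (-s) x⁻¹ - 1 / s

noncomputable def ES {r : ℕ} (p : Fin r → ℕ) (q : ℕ) (x : Fin r → ℂ) (y : ℂ) : ℂ :=
  limUnder atTop (fun N : ℕ => ∑ n ∈ Icc 1 N, (∏ i, zf n (p i) (x i)) * y ^ n / (n : ℂ) ^ q)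

noncomputable def S1 (p q : ℕ) (x y : ℂ) : ℂ :=
  limUnder atTop (fun N : ℕ => ∑ n ∈ Icc 1 N, zf n p x * y ^ n / (n : ℂ) ^ q)

noncomputable def S2 (p1 p2 q : ℕ) (x1 x2 y : ℂ) : ℂ :=
  limUnder atTop (fun N : ℕ => ∑ n ∈ Icc 1 N, zf n p1 x1 * zf n p2 x2 * y ^ n / (n : ℂ) ^ q)

noncomputable def S3 (p1 p2 p3 q : ℕ) (x1 x2 x3 y : ℂ) : ℂ :=
  limUnder atTop (fun N : ℕ =>
    ∑ n ∈ Icc 1 N, zf n p1 x1 * zf n p2 x2 * zf n p3 x3 * y ^ n / (n : ℂ) ^ q)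

noncomputable def Li2 (p q : ℕ) (x y : ℂ) : ℂ :=
  limUnder atTop (fun N : ℕ =>
    ∑ n ∈ Icc 1 N, ∑ m ∈ Ico 1 n, x ^ m * y ^ n / ((m : ℂ) ^ p * (n : ℂ) ^ q))

noncomputable def Li3 (p q r : ℕ) (x y z : ℂ) : ℂ :=
  limUnder atTop (fun N : ℕ =>
    ∑ n3 ∈ Icc 1 N, ∑ n2 ∈ Ico 1 n3, ∑ n1 ∈ Ico 1 n2,
      x ^ n1 * y ^ n2 * z ^ n3 / ((n1 : ℂ) ^ p * (n2 : ℂ) ^ q * (n3 : ℂ) ^ r))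

noncomputable def az1 (k : ℕ) (e : ℂ) : ℂ :=
  limUnder atTop (fun N : ℕ => ∑ n ∈ Icc 1 N, e ^ n / (n : ℂ) ^ k)

noncomputable def az2 (k1 k2 : ℕ) (e1 e2 : ℂ) : ℂ :=
  limUnder atTop (fun N : ℕ =>
    ∑ n2 ∈ Icc 1 N, ∑ n1 ∈ Ico 1 n2, e1 ^ n1 * e2 ^ n2 / ((n1 : ℂ) ^ k1 * (n2 : ℂ) ^ k2))

noncomputable def az3 (k1 k2 k3 : ℕ) (e1 e2 e3 : ℂ) : ℂ :=
  limUnder atTop (fun N : ℕ =>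
    ∑ n3 ∈ Icc 1 N, ∑ n2 ∈ Ico 1 n3, ∑ n1 ∈ Ico 1 n2,
      e1 ^ n1 * e2 ^ n2 * e3 ^ n3 / ((n1 : ℂ) ^ k1 * (n2 : ℂ) ^ k2 * (n3 : ℂ) ^ k3))

noncomputable def az4 (k1 k2 k3 k4 : ℕ) (e1 e2 e3 e4 : ℂ) : ℂ :=
  limUnder atTop (fun N : ℕ =>
    ∑ n4 ∈ Icc 1 N, ∑ n3 ∈ Ico 1 n4, ∑ n2 ∈ Ico 1 n3, ∑ n1 ∈ Ico 1 n2,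
      e1 ^ n1 * e2 ^ n2 * e3 ^ n3 * e4 ^ n4 /
        ((n1 : ℂ) ^ k1 * (n2 : ℂ) ^ k2 * (n3 : ℂ) ^ k3 * (n4 : ℂ) ^ k4))

def IsRootOfUnity (x : ℂ) : Prop := ∃ n : ℕ, 0 < n ∧ x ^ n = 1

lemma norm_rou {x : ℂ} (hx : ∃ n : ℕ, 0 < n ∧ x ^ n = 1) : ‖x‖ = 1 := by
  obtain ⟨n, hn, h⟩ := hx
  have h1 : ‖x‖ ^ n = 1 := by rw [← norm_pow, h, norm_one]
  rcases (pow_eq_one_iff_cases.mp h1) with h' | h' | h'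
  · omega
  · exact h'
  · nlinarith [norm_nonneg x]

lemma geom_bound {x : ℂ} (hx : ‖x‖ = 1) (hne : x ≠ 1) (N : ℕ) :
    ‖∑ i ∈ range N, x ^ i‖ ≤ 2 / ‖x - 1‖ := by
  rw [geom_sum_eq hne, norm_div]
  apply div_le_div_of_nonneg_right ?_ (by simp [sub_eq_zero, hne])
  calc ‖x ^ N - 1‖ ≤ ‖x ^ N‖ + ‖(1:ℂ)‖ := norm_sub_le _ _
    _ ≤ 2 := by simp [norm_pow, hx]; norm_num

lemma dirichlet_test (u z : ℕ → ℂ) (C : ℝ)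
    (hz : ∀ N, ‖∑ i ∈ range N, z i‖ ≤ C)
    (hu : Tendsto u atTop (nhds 0))
    (hbv : Summable fun n => ‖u (n + 1) - u n‖) :
    ∃ L, Tendsto (fun N => ∑ n ∈ range N, u n * z n) atTop (nhds L) := by
  have hC : 0 ≤ C := le_trans (norm_nonneg _) (hz 0) |>.trans_eq' (by simp)
  set S : ℕ → ℂ := fun N => ∑ i ∈ range N, z i with hS
  have key : ∀ N, ∑ n ∈ range N, u n * z n
      = u (N - 1) * S N - ∑ i ∈ range (N - 1), (u (i + 1) - u i) * S (i + 1) := by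
    intro N
    simpa [smul_eq_mul] using Finset.sum_range_by_parts u z N
  -- second piece summable
  have hv : Summable fun i => (u (i + 1) - u i) * S (i + 1) := by
    apply Summable.of_norm
    apply Summable.of_nonneg_of_le (fun _ => norm_nonneg _) (fun i => ?_) (hbv.mul_right C)
    rw [norm_mul]
    exact mul_le_mul_of_nonneg_left (hz _) (norm_nonneg _)
  have h2 : Tendsto (fun N => ∑ i ∈ range N, (u (i + 1) - u i) * S (i + 1)) atTop
      (nhds (∑' i, (u (i + 1) - u i) * S (i + 1))) := hv.hasSum.tendsto_sum_nat
  have h2' : Tendsto (fun N => ∑ i ∈ range (N - 1), (u (i + 1) - u i) * S (i + 1)) atTop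
      (nhds (∑' i, (u (i + 1) - u i) * S (i + 1))) :=
    h2.comp (tendsto_sub_atTop_nat 1)
  have h1 : Tendsto (fun N => u (N - 1) * S N) atTop (nhds 0) := by
    rw [tendsto_zero_iff_norm_tendsto_zero]
    have hg : Tendsto (fun N : ℕ => ‖u (N - 1)‖ * C) atTop (nhds 0) := by
      have : Tendsto (fun N : ℕ => ‖u (N - 1)‖) atTop (nhds 0) := by
        have := (tendsto_zero_iff_norm_tendsto_zero.mp hu).comp (tendsto_sub_atTop_nat 1)
        exact this
      simpa using this.mul_const C
    apply squeeze_zero (fun _ => norm_nonneg _) (fun N => ?_) hg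
    rw [norm_mul]
    exact mul_le_mul_of_nonneg_left (hz N) (norm_nonneg _)
  refine ⟨0 - ∑' i, (u (i + 1) - u i) * S (i + 1), ?_⟩
  have := h1.sub h2'
  simpa only [← key] using this

lemma Icc_of_range (f : ℕ → ℂ) (h0 : f 0 = 0) (L : ℂ)
    (h : Tendsto (fun N => ∑ n ∈ range N, f n) atTop (nhds L)) :
    Tendsto (fun N => ∑ n ∈ Icc 1 N, f n) atTop (nhds L) := by
  have e : ∀ N, ∑ n ∈ Icc 1 N, f n = ∑ n ∈ range (N + 1), f n := by
    intro N
    have : range (N + 1) = insert 0 (Icc 1 N) := by ext m; simp; omega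
    rw [this, Finset.sum_insert (by simp), h0, zero_add]
  simp only [e]
  exact h.comp (tendsto_add_atTop_nat 1)

lemma one_add_log_le (n : ℕ) (hn : 1 ≤ n) :
    1 + Real.log n ≤ 4 * (n : ℝ) ^ ((1 : ℝ) / 4) := by
  have hn0 : (0 : ℝ) < n := by exact_mod_cast hn
  have h1 : Real.log ((n : ℝ) ^ ((1 : ℝ) / 4)) ≤ (n : ℝ) ^ ((1 : ℝ) / 4) - 1 :=
    Real.log_le_sub_one_of_pos (Real.rpow_pos_of_pos hn0 _)
  rw [Real.log_rpow hn0] at h1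
  nlinarith [Real.rpow_pos_of_pos hn0 ((1:ℝ)/4)]

lemma sq_one_add_log_le (n : ℕ) (hn : 1 ≤ n) :
    (1 + Real.log n) ^ 2 ≤ 16 * (n : ℝ) ^ ((1 : ℝ) / 2) := by
  have h0 : (0:ℝ) ≤ 1 + Real.log n := by
    have := Real.log_natCast_nonneg n; linarith
  have h := one_add_log_le n hn
  have hn0 : (0 : ℝ) < n := by exact_mod_cast hn
  have e : ((n : ℝ) ^ ((1 : ℝ) / 4)) ^ 2 = (n : ℝ) ^ ((1 : ℝ) / 2) := by
    rw [← Real.rpow_natCast ((n:ℝ) ^ ((1:ℝ)/4)) 2, ← Real.rpow_mul hn0.le]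
    norm_num
  nlinarith [Real.rpow_pos_of_pos hn0 ((1:ℝ)/4)]

lemma summable_E : Summable (fun n : ℕ => (1 + Real.log n) ^ 2 / (n : ℝ) ^ 2) := by
  apply Summable.of_norm_bounded_eventually (g := fun n : ℕ => 16 * (((n : ℝ) ^ ((3:ℝ)/2))⁻¹))
  · exact (Real.summable_nat_rpow_inv.mpr (by norm_num)).mul_left 16
  · rw [Nat.cofinite_eq_atTop]
    filter_upwards [eventually_ge_atTop 1] with n hn
    have hn0 : (0 : ℝ) < n := by exact_mod_cast hn
    have h0 : (0:ℝ) ≤ 1 + Real.log n := by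
      have := Real.log_natCast_nonneg n; linarith
    rw [Real.norm_eq_abs, abs_of_nonneg (by positivity)]
    rw [div_le_iff₀ (by positivity)]
    calc (1 + Real.log n) ^ 2 ≤ 16 * (n : ℝ) ^ ((1 : ℝ) / 2) := sq_one_add_log_le n hn
      _ = 16 * ((n : ℝ) ^ ((3:ℝ)/2))⁻¹ * (n : ℝ) ^ 2 := by
          rw [← Real.rpow_neg hn0.le, mul_assoc, ← Real.rpow_natCast (n:ℝ) 2,
            ← Real.rpow_add hn0]
          norm_num

lemma tendsto_E1 : Tendsto (fun n : ℕ => (1 + Real.log n) ^ 2 / (n : ℝ)) atTop (nhds 0) := by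
  have hg : Tendsto (fun n : ℕ => 16 * (((n : ℝ) ^ ((1:ℝ)/2))⁻¹)) atTop (nhds 0) := by
    have h1 : Tendsto (fun x : ℝ => x ^ ((1:ℝ)/2)) atTop atTop :=
      tendsto_rpow_atTop (by norm_num)
    have := (h1.comp tendsto_natCast_atTop_atTop).inv_tendsto_atTop
    simpa using this.const_mul (16:ℝ)
  apply squeeze_zero' (g := fun n : ℕ => 16 * (((n : ℝ) ^ ((1:ℝ)/2))⁻¹)) ?_ ?_ hg
  · filter_upwards [eventually_ge_atTop 1] with n hn
    have h0 : (0:ℝ) ≤ 1 + Real.log n := by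
      have := Real.log_natCast_nonneg n; linarith
    positivity
  · filter_upwards [eventually_ge_atTop 1] with n hn
    have hn0 : (0 : ℝ) < n := by exact_mod_cast hn
    rw [div_le_iff₀ hn0]
    calc (1 + Real.log n) ^ 2 ≤ 16 * (n : ℝ) ^ ((1 : ℝ) / 2) := sq_one_add_log_le n hn
      _ = 16 * ((n : ℝ) ^ ((1:ℝ)/2))⁻¹ * (n : ℝ) := by
          rw [← Real.rpow_neg hn0.le, mul_assoc]
          nth_rewrite 3 [← Real.rpow_one (n:ℝ)]
          rw [← Real.rpow_add hn0]
          norm_num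

lemma harmonic_le : ∀ n : ℕ, (∑ k ∈ Icc 1 n, (1 : ℝ) / k) ≤ 1 + Real.log n := by
  intro n
  induction n with
  | zero => simp
  | succ m ih =>
    rcases Nat.eq_zero_or_pos m with hm | hm
    · subst hm; norm_num
    have hstep : Real.log m + 1 / (m + 1) ≤ Real.log (m + 1) := by
      have hm0 : (0 : ℝ) < m := by exact_mod_cast hm
      have h := Real.log_le_sub_one_of_pos (show (0:ℝ) < (m : ℝ) / (m + 1) by positivity)
      rw [Real.log_div (by positivity) (by positivity)] at h
      have e : (m : ℝ) / (m + 1) - 1 = -(1 / (m + 1)) := by field_simp; ring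
      rw [e] at h
      linarith
    rw [Finset.sum_Icc_succ_top (by omega : 1 ≤ m + 1)]
    push_cast
    push_cast at ih hstep
    linarith

lemma inv_sq_sum_le (p : ℕ) (hp : 2 ≤ p) (n : ℕ) :
    (∑ k ∈ Icc 1 n, (1 : ℝ) / (k : ℝ) ^ p) ≤ 2 := by
  have key : ∀ m : ℕ, (∑ k ∈ Icc 1 m, (1 : ℝ) / (k : ℝ) ^ 2) ≤ 2 - 2 / (m + 1) := by
    intro m
    induction m with
    | zero => norm_num
    | succ j ih =>
      rw [Finset.sum_Icc_succ_top (by omega : 1 ≤ j + 1)]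
      have h1 : (1 : ℝ) / ((j + 1 : ℕ) : ℝ) ^ 2 ≤ 2 / ((j:ℝ) + 1) - 2 / ((j:ℝ) + 2) := by
        push_cast
        rw [div_sub_div _ _ (by positivity) (by positivity),
          div_le_div_iff₀ (by positivity) (by positivity)]
        nlinarith [sq_nonneg ((j:ℝ)+1)]
      have e : ((j:ℝ) + 1 + 1) = (j:ℝ) + 2 := by ring
      push_cast at ih h1 ⊢
      rw [e]
      linarith
  calc (∑ k ∈ Icc 1 n, (1 : ℝ) / (k : ℝ) ^ p)
      ≤ ∑ k ∈ Icc 1 n, (1 : ℝ) / (k : ℝ) ^ 2 := by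
        apply Finset.sum_le_sum
        intro k hk
        simp only [Finset.mem_Icc] at hk
        have hk0 : (1:ℝ) ≤ (k : ℝ) := by exact_mod_cast hk.1
        exact one_div_le_one_div_of_le (by positivity) (pow_le_pow_right₀ hk0 hp)
    _ ≤ 2 - 2/(n+1) := key n
    _ ≤ 2 := by nlinarith [show (0:ℝ) < 2/((n:ℝ)+1) by positivity]

lemma pow_succ_le (n d : ℕ) : (n + 1) ^ (d + 1) ≤ n ^ (d + 1) + (d + 1) * (n + 1) ^ d := by
  induction d with
  | zero => simp
  | succ j ih =>
    have h2 : n ^ (j + 1) ≤ (n + 1) ^ (j + 1) := Nat.pow_le_pow_left (by omega) _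
    calc (n + 1) ^ (j + 2) = (n + 1) * (n + 1) ^ (j + 1) := by ring
      _ ≤ (n + 1) * (n ^ (j + 1) + (j + 1) * (n + 1) ^ j) := Nat.mul_le_mul_left _ ih
      _ = n ^ (j + 2) + n ^ (j+1) + (j + 1) * (n + 1) ^ (j+1) := by ring
      _ ≤ n ^ (j + 2) + (n+1) ^ (j+1) + (j + 1) * (n + 1) ^ (j+1) := by omega
      _ = n ^ (j + 2) + (j + 2) * (n + 1) ^ (j + 1) := by ring

lemma inv_pow_diff_le (e n : ℕ) (he : 1 ≤ e) (hn : 1 ≤ n) :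
    1 / (n : ℝ) ^ e - 1 / ((n : ℝ) + 1) ^ e ≤ e / (n : ℝ) ^ 2 := by
  obtain ⟨d, rfl⟩ : ∃ d, e = d + 1 := ⟨e - 1, by omega⟩
  have hn0 : (0 : ℝ) < n := by exact_mod_cast hn
  have hn1 : (1 : ℝ) ≤ n := by exact_mod_cast hn
  have hkey : ((n : ℝ) + 1) ^ (d + 1) ≤ (n : ℝ) ^ (d + 1) + (d + 1) * ((n : ℝ) + 1) ^ d := by
    exact_mod_cast pow_succ_le n d
  have h1 : (1:ℝ) / (n : ℝ) ^ (d+1) - 1 / ((n : ℝ) + 1) ^ (d+1)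
      = (((n:ℝ)+1) ^ (d+1) - (n:ℝ) ^ (d+1)) / ((n:ℝ) ^ (d+1) * ((n:ℝ)+1) ^ (d+1)) := by
    field_simp
  rw [h1]
  have h2 : (((n:ℝ)+1) ^ (d+1) - (n:ℝ) ^ (d+1)) ≤ ((d:ℝ) + 1) * ((n : ℝ) + 1) ^ d := by
    push_cast at hkey; linarith
  calc (((n:ℝ)+1) ^ (d+1) - (n:ℝ) ^ (d+1)) / ((n:ℝ) ^ (d+1) * ((n:ℝ)+1) ^ (d+1))
      ≤ (((d:ℝ) + 1) * ((n : ℝ) + 1) ^ d) / ((n:ℝ) ^ (d+1) * ((n:ℝ)+1) ^ (d+1)) := by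
        gcongr
    _ = ((d:ℝ) + 1) / ((n:ℝ) ^ (d+1) * ((n:ℝ)+1)) := by
        rw [pow_succ ((n:ℝ)+1) d]
        field_simp
    _ ≤ ((d:ℝ) + 1) / (n : ℝ) ^ 2 := by
        gcongr
        calc (n:ℝ) ^ 2 = (n:ℝ) * (n:ℝ) := sq (n:ℝ)
          _ ≤ (n:ℝ) ^ (d+1) * ((n:ℝ)+1) :=
            mul_le_mul (le_self_pow₀ hn1 (by omega)) (by linarith) hn0.le (by positivity)
    _ = ((d+1 : ℕ) : ℝ) / (n : ℝ) ^ 2 := by push_cast; ring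

lemma norm_pow_div (y : ℂ) (hy : ‖y‖ = 1) (m p : ℕ) :
    ‖y ^ m / (m : ℂ) ^ p‖ = 1 / (m : ℝ) ^ p := by
  rw [norm_div, norm_pow, norm_pow, hy, one_pow, Complex.norm_natCast]

lemma sum_pow_div_le_log (y : ℂ) (hy : ‖y‖ = 1) (p : ℕ) (hp : 1 ≤ p) (n : ℕ)
    (s : Finset ℕ) (hs : s ⊆ Icc 1 n) :
    ‖∑ m ∈ s, y ^ m / (m : ℂ) ^ p‖ ≤ 1 + Real.log n := by
  calc ‖∑ m ∈ s, y ^ m / (m : ℂ) ^ p‖ ≤ ∑ m ∈ s, ‖y ^ m / (m : ℂ) ^ p‖ :=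
        norm_sum_le _ _
    _ = ∑ m ∈ s, 1 / (m : ℝ) ^ p := by
        exact Finset.sum_congr rfl fun m _ => norm_pow_div y hy m p
    _ ≤ ∑ m ∈ s, 1 / (m : ℝ) := by
        apply Finset.sum_le_sum
        intro m hm
        have hm1 : 1 ≤ m := by
          have := hs hm; simp only [Finset.mem_Icc] at this; exact this.1
        have h1 : (1:ℝ) ≤ (m:ℝ) := by exact_mod_cast hm1
        apply div_le_div_of_nonneg_left one_pos.le (by positivity)
        calc (m:ℝ) = (m:ℝ) ^ 1 := (pow_one _).symm
          _ ≤ (m:ℝ) ^ p := pow_le_pow_right₀ h1 hp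
    _ ≤ ∑ m ∈ Icc 1 n, 1 / (m : ℝ) := by
        apply Finset.sum_le_sum_of_subset_of_nonneg hs
        intro m _ _
        positivity
    _ ≤ 1 + Real.log n := harmonic_le n

lemma sum_pow_div_le_two (y : ℂ) (hy : ‖y‖ = 1) (p : ℕ) (hp : 2 ≤ p) (n : ℕ)
    (s : Finset ℕ) (hs : s ⊆ Icc 1 n) :
    ‖∑ m ∈ s, y ^ m / (m : ℂ) ^ p‖ ≤ 2 := by
  calc ‖∑ m ∈ s, y ^ m / (m : ℂ) ^ p‖ ≤ ∑ m ∈ s, ‖y ^ m / (m : ℂ) ^ p‖ :=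
        norm_sum_le _ _
    _ = ∑ m ∈ s, 1 / (m : ℝ) ^ p := by
        exact Finset.sum_congr rfl fun m _ => norm_pow_div y hy m p
    _ ≤ ∑ m ∈ Icc 1 n, 1 / (m : ℝ) ^ p := by
        apply Finset.sum_le_sum_of_subset_of_nonneg hs
        intro m _ _
        positivity
    _ ≤ 2 := inv_sq_sum_le p hp n

lemma step_bound (p n : ℕ) (hp : 1 ≤ p) (hn : 1 ≤ n) :
    (1:ℝ) / (n:ℝ) ^ p ≤ 2 * (1 + Real.log ((n:ℝ) + 1)) / ((n:ℝ) + 1) := by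
  have hn1 : (1:ℝ) ≤ (n:ℝ) := by exact_mod_cast hn
  have hlog : (0:ℝ) ≤ Real.log ((n:ℝ) + 1) := Real.log_nonneg (by linarith)
  calc (1:ℝ) / (n:ℝ) ^ p ≤ 1 / (n:ℝ) := by
        apply div_le_div_of_nonneg_left one_pos.le (by positivity)
        calc (n:ℝ) = (n:ℝ) ^ 1 := (pow_one _).symm
          _ ≤ (n:ℝ) ^ p := pow_le_pow_right₀ hn1 hp
    _ ≤ 2 / ((n:ℝ) + 1) := by
        rw [div_le_div_iff₀ (by linarith) (by linarith)]
        linarith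
    _ ≤ 2 * (1 + Real.log ((n:ℝ) + 1)) / ((n:ℝ) + 1) := by
        gcongr
        linarith

lemma inner_bound (y z : ℂ) (hy : ‖y‖ = 1) (hz : ‖z‖ = 1) (p q n : ℕ)
    (hp : 1 ≤ p) (hq : 1 ≤ q) (hn : 1 ≤ n) :
    ‖∑ m ∈ Ico 1 n, y ^ m * z ^ n / ((m : ℂ) ^ p * (n : ℂ) ^ q)‖
      ≤ (1 + Real.log n) / n := by
  have hn1 : (1:ℝ) ≤ (n:ℝ) := by exact_mod_cast hn
  calc ‖∑ m ∈ Ico 1 n, y ^ m * z ^ n / ((m : ℂ) ^ p * (n : ℂ) ^ q)‖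
      ≤ ∑ m ∈ Ico 1 n, ‖y ^ m * z ^ n / ((m : ℂ) ^ p * (n : ℂ) ^ q)‖ := norm_sum_le _ _
    _ = ∑ m ∈ Ico 1 n, (1 / (m : ℝ) ^ p) * (1 / (n : ℝ) ^ q) := by
        apply Finset.sum_congr rfl
        intro m _
        rw [show y ^ m * z ^ n / ((m : ℂ) ^ p * (n : ℂ) ^ q)
            = (y ^ m / (m : ℂ) ^ p) * (z ^ n / (n : ℂ) ^ q) from by ring,
          norm_mul, norm_pow_div y hy, norm_pow_div z hz]
    _ ≤ ∑ m ∈ Ico 1 n, (1 / (m : ℝ)) * (1 / (n : ℝ)) := by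
        apply Finset.sum_le_sum
        intro m hm
        simp only [Finset.mem_Ico] at hm
        have h1 : (1:ℝ) ≤ (m:ℝ) := by exact_mod_cast hm.1
        apply mul_le_mul ?_ ?_ (by positivity) (by positivity)
        · apply div_le_div_of_nonneg_left one_pos.le (by positivity)
          calc (m:ℝ) = (m:ℝ) ^ 1 := (pow_one _).symm
            _ ≤ (m:ℝ) ^ p := pow_le_pow_right₀ h1 hp
        · apply div_le_div_of_nonneg_left one_pos.le (by positivity)
          calc (n:ℝ) = (n:ℝ) ^ 1 := (pow_one _).symm
            _ ≤ (n:ℝ) ^ q := pow_le_pow_right₀ hn1 hq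
    _ = (∑ m ∈ Ico 1 n, 1 / (m : ℝ)) * (1 / (n : ℝ)) := by rw [Finset.sum_mul]
    _ ≤ (1 + Real.log n) * (1 / (n : ℝ)) := by
        apply mul_le_mul_of_nonneg_right ?_ (by positivity)
        calc (∑ m ∈ Ico 1 n, 1 / (m : ℝ)) ≤ ∑ m ∈ Icc 1 n, 1 / (m : ℝ) := by
              apply Finset.sum_le_sum_of_subset_of_nonneg
              · intro m hm; simp only [Finset.mem_Ico] at hm; simp; omega
              · intro m _ _; positivity
          _ ≤ 1 + Real.log n := harmonic_le n
    _ = (1 + Real.log n) / n := by ring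

lemma master (A : ℕ → ℂ) (e : ℕ) (he : 1 ≤ e) (K : ℝ)
    (hA : ∀ n : ℕ, 1 ≤ n → ‖A n‖ ≤ K * (1 + Real.log n))
    (hdA : ∀ n : ℕ, 1 ≤ n → ‖A (n + 1) - A n‖ ≤ K * (1 + Real.log (n + 1)) / (n + 1))
    (x : ℂ) (hx : ‖x‖ = 1) (habs : x = 1 → 2 ≤ e) :
    ∃ L, Tendsto (fun N => ∑ n ∈ Icc 1 N, A n * x ^ n / (n : ℂ) ^ e) atTop (nhds L) := by
  have hK : 0 ≤ K := by
    have h := hA 1 le_rfl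
    have h0 := norm_nonneg (A 1)
    simp only [Nat.cast_one, Real.log_one, add_zero, mul_one] at h
    linarith
  set u : ℕ → ℂ := fun n => A n / (n : ℂ) ^ e with hu_def
  have hlog : ∀ n : ℕ, (0:ℝ) ≤ Real.log n := fun n => Real.log_natCast_nonneg n
  have norm_u : ∀ n : ℕ, 1 ≤ n → ‖u n‖ = ‖A n‖ / (n : ℝ) ^ e := by
    intro n hn
    simp [hu_def, norm_div, norm_pow, Complex.norm_natCast]
  have hu0 : u 0 = 0 := by simp [hu_def, zero_pow (by omega : e ≠ 0)]
  -- u tends to zero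
  have hu : Tendsto u atTop (nhds 0) := by
    rw [tendsto_zero_iff_norm_tendsto_zero]
    apply squeeze_zero' (g := fun n : ℕ => K * ((1 + Real.log n) ^ 2 / (n : ℝ)))
    · exact Eventually.of_forall fun n => norm_nonneg _
    · filter_upwards [eventually_ge_atTop 1] with n hn
      have hn0 : (0:ℝ) < n := by exact_mod_cast hn
      have h1 : (1:ℝ) ≤ 1 + Real.log n := by linarith [hlog n]
      rw [norm_u n hn]
      calc ‖A n‖ / (n : ℝ) ^ e ≤ (K * (1 + Real.log n)) / (n : ℝ) := by
            gcongr
            · exact hA n hn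
            · calc (n:ℝ) = (n:ℝ) ^ 1 := (pow_one _).symm
                _ ≤ (n:ℝ) ^ e := pow_le_pow_right₀ (by exact_mod_cast hn) he
        _ ≤ K * ((1 + Real.log n) ^ 2 / (n : ℝ)) := by
            rw [mul_div_assoc]
            gcongr
            nlinarith
    · simpa using tendsto_E1.const_mul K
  -- bounded variation
  have hbv : Summable fun n => ‖u (n + 1) - u n‖ := by
    have hg : Summable (fun n : ℕ =>
        (K * (1 + 4 * e)) * ((1 + Real.log ((n:ℝ) + 1)) ^ 2 / ((n:ℝ) + 1) ^ 2)) := by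
      apply Summable.mul_left
      have := (summable_nat_add_iff 1).mpr summable_E
      refine this.congr fun n => ?_
      push_cast
      ring
    apply Summable.of_norm_bounded_eventually hg
    rw [Nat.cofinite_eq_atTop]
    filter_upwards [eventually_ge_atTop 1] with n hn
    have hn0 : (0:ℝ) < n := by exact_mod_cast hn
    have hn1 : (1:ℝ) ≤ n := by exact_mod_cast hn
    have h1 : (1:ℝ) ≤ 1 + Real.log n := by linarith [hlog n]
    have h1' : (1:ℝ) ≤ 1 + Real.log ((n:ℝ) + 1) := by
      have : ((n:ℝ) + 1) = ((n + 1 : ℕ) : ℝ) := by push_cast; ring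
      rw [this]; linarith [hlog (n + 1)]
    have hmono : Real.log (n:ℝ) ≤ Real.log ((n:ℝ) + 1) :=
      Real.log_le_log hn0 (by linarith)
    rw [Real.norm_eq_abs, abs_of_nonneg (norm_nonneg _)]
    have split : u (n + 1) - u n
        = (A (n + 1) - A n) / ((n : ℂ) + 1) ^ e + A n * (1 / ((n:ℂ) + 1) ^ e - 1 / (n:ℂ) ^ e) := by
      simp only [hu_def]
      push_cast
      ring
    rw [split]
    have hb1 : ‖(A (n + 1) - A n) / ((n : ℂ) + 1) ^ e‖
        ≤ K * (1 + Real.log ((n:ℝ) + 1)) ^ 2 / ((n:ℝ) + 1) ^ 2 := by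
      rw [norm_div, norm_pow]
      have hnrm : ‖(n:ℂ) + 1‖ = (n:ℝ) + 1 := by
        have e1 : ((n:ℂ) + 1) = ((n + 1 : ℕ) : ℂ) := by push_cast; ring
        rw [e1, Complex.norm_natCast]; push_cast; ring
      rw [hnrm]
      calc ‖A (n + 1) - A n‖ / ((n:ℝ) + 1) ^ e
          ≤ (K * (1 + Real.log ((n:ℝ) + 1)) / ((n:ℝ) + 1)) / ((n:ℝ) + 1) := by
            gcongr
            · have := hdA n hn
              push_cast at this
              exact this
            · calc ((n:ℝ) + 1) = ((n:ℝ) + 1) ^ 1 := (pow_one _).symm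
                _ ≤ ((n:ℝ) + 1) ^ e := pow_le_pow_right₀ (by linarith) he
        _ = K * (1 + Real.log ((n:ℝ) + 1)) / ((n:ℝ) + 1) ^ 2 := by
            rw [div_div, ← pow_two]
        _ ≤ K * (1 + Real.log ((n:ℝ) + 1)) ^ 2 / ((n:ℝ) + 1) ^ 2 := by
            gcongr
            nlinarith
    have hb2 : ‖A n * (1 / ((n:ℂ) + 1) ^ e - 1 / (n:ℂ) ^ e)‖
        ≤ K * (1 + Real.log (n:ℝ)) * (e / (n:ℝ) ^ 2) := by
      rw [norm_mul]
      apply mul_le_mul (hA n hn) ?_ (norm_nonneg _) (by positivity)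
      have ecast : (1 / ((n:ℂ) + 1) ^ e - 1 / (n:ℂ) ^ e)
          = (((1 / ((n:ℝ) + 1) ^ e - 1 / (n:ℝ) ^ e : ℝ)) : ℂ) := by
        push_cast
        ring
      have hle : (1:ℝ) / ((n:ℝ) + 1) ^ e ≤ 1 / (n:ℝ) ^ e := by gcongr <;> linarith
      rw [ecast, Complex.norm_real, Real.norm_eq_abs, abs_sub_comm,
        abs_of_nonneg (by linarith)]
      exact inv_pow_diff_le e n he hn
    calc ‖_ + _‖ ≤ _ + _ := norm_add_le _ _
      _ ≤ K * (1 + Real.log ((n:ℝ) + 1)) ^ 2 / ((n:ℝ) + 1) ^ 2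
          + K * (1 + Real.log (n:ℝ)) * (e / (n:ℝ) ^ 2) := add_le_add hb1 hb2
      _ ≤ (K * (1 + 4 * e)) * ((1 + Real.log ((n:ℝ) + 1)) ^ 2 / ((n:ℝ) + 1) ^ 2) := by
          have hquad : ((n:ℝ) + 1) ^ 2 ≤ 4 * (n:ℝ) ^ 2 := by nlinarith
          have hlogle : (1 + Real.log (n:ℝ)) ≤ (1 + Real.log ((n:ℝ) + 1)) := by linarith
          have hstep : (1 + Real.log (n:ℝ)) / (n:ℝ) ^ 2
              ≤ 4 * ((1 + Real.log ((n:ℝ) + 1)) ^ 2 / ((n:ℝ) + 1) ^ 2) := by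
            calc (1 + Real.log (n:ℝ)) / (n:ℝ) ^ 2
                ≤ (1 + Real.log ((n:ℝ) + 1)) ^ 2 / (n:ℝ) ^ 2 := by
                  gcongr
                  nlinarith
              _ ≤ ((1 + Real.log ((n:ℝ) + 1)) ^ 2 * 4) / ((n:ℝ) + 1) ^ 2 := by
                  rw [div_le_div_iff₀ (by positivity) (by positivity)]
                  nlinarith [sq_nonneg (1 + Real.log ((n:ℝ) + 1))]
              _ = 4 * ((1 + Real.log ((n:ℝ) + 1)) ^ 2 / ((n:ℝ) + 1) ^ 2) := by ring
          have key : K * (1 + Real.log (n:ℝ)) * ((e:ℝ) / (n:ℝ) ^ 2)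
              ≤ K * (e:ℝ) * (4 * ((1 + Real.log ((n:ℝ) + 1)) ^ 2 / ((n:ℝ) + 1) ^ 2)) := by
            have he0 : (0:ℝ) ≤ (e:ℝ) := by positivity
            calc K * (1 + Real.log (n:ℝ)) * ((e:ℝ) / (n:ℝ) ^ 2)
                = (K * (e:ℝ)) * ((1 + Real.log (n:ℝ)) / (n:ℝ) ^ 2) := by ring
              _ ≤ (K * (e:ℝ)) * (4 * ((1 + Real.log ((n:ℝ) + 1)) ^ 2 / ((n:ℝ) + 1) ^ 2)) :=
                  mul_le_mul_of_nonneg_left hstep (by positivity)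
              _ = K * (e:ℝ) * (4 * ((1 + Real.log ((n:ℝ) + 1)) ^ 2 / ((n:ℝ) + 1) ^ 2)) := by ring
          have expand : (K * (1 + 4 * e)) * ((1 + Real.log ((n:ℝ) + 1)) ^ 2 / ((n:ℝ) + 1) ^ 2)
              = K * (1 + Real.log ((n:ℝ) + 1)) ^ 2 / ((n:ℝ) + 1) ^ 2
                + K * (e:ℝ) * (4 * ((1 + Real.log ((n:ℝ) + 1)) ^ 2 / ((n:ℝ) + 1) ^ 2)) := by
            ring
          rw [expand]
          linarith [key]
  -- combine
  have hshape : ∀ n : ℕ, A n * x ^ n / (n : ℂ) ^ e = u n * x ^ n := by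
    intro n; simp only [hu_def]; ring
  simp only [hshape]
  by_cases hx1 : x = 1
  · subst hx1
    have habs2 : Summable (fun n => ‖u n * 1 ^ n‖) := by
      have hg : Summable (fun n : ℕ => K * ((1 + Real.log n) ^ 2 / (n : ℝ) ^ 2)) :=
        summable_E.mul_left K
      apply Summable.of_norm_bounded_eventually hg
      rw [Nat.cofinite_eq_atTop]
      filter_upwards [eventually_ge_atTop 1] with n hn
      have hn0 : (0:ℝ) < n := by exact_mod_cast hn
      have hn1 : (1:ℝ) ≤ n := by exact_mod_cast hn
      have h1 : (1:ℝ) ≤ 1 + Real.log n := by linarith [hlog n]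
      rw [Real.norm_eq_abs, abs_of_nonneg (norm_nonneg _), one_pow, mul_one, norm_u n hn]
      calc ‖A n‖ / (n : ℝ) ^ e ≤ (K * (1 + Real.log n)) / (n : ℝ) ^ 2 := by
            gcongr
            · exact hA n hn
            · exact habs rfl
        _ ≤ K * ((1 + Real.log n) ^ 2 / (n : ℝ) ^ 2) := by
            rw [mul_div_assoc]
            gcongr
            nlinarith
    exact ⟨_, Icc_of_range _ (by simp [hu0]) _ habs2.of_norm.hasSum.tendsto_sum_nat⟩
  · obtain ⟨L, hL⟩ := dirichlet_test u (fun n => x ^ n) (2 / ‖x - 1‖)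
      (geom_bound hx hx1) hu hbv
    exact ⟨L, Icc_of_range _ (by simp [hu0]) L hL⟩

lemma key_identity (A B C : ℕ → ℂ) (N : ℕ) :
    ∑ n ∈ Icc 1 N, (∑ k ∈ Icc 1 n, A k) * (∑ m ∈ Icc 1 n, B m) * C n
    = (∑ k ∈ Icc 1 N, A k) * (∑ n ∈ Icc 1 N, ((∑ m ∈ Ico 1 n, B m) * C n + B n * C n))
      - (∑ k ∈ Icc 1 N, (∑ n ∈ Ico 1 k, (∑ m ∈ Ico 1 n, B m) * C n) * A k)
      - (∑ k ∈ Icc 1 N, (∑ n ∈ Ico 1 k, B n * C n) * A k) := by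
  have hsplitB : ∀ n : ℕ, 1 ≤ n → ∑ m ∈ Icc 1 n, B m = (∑ m ∈ Ico 1 n, B m) + B n := by
    intro n hn
    rw [← Finset.Ico_add_one_right_eq_Icc, Finset.sum_Ico_succ_top (by omega)]
  have hsplitA : ∀ n ∈ Icc 1 N,
      ∑ k ∈ Icc 1 n, A k = (∑ k ∈ Icc 1 N, A k) - ∑ k ∈ Ioc n N, A k := by
    intro n hn
    simp only [Finset.mem_Icc] at hn
    have h1 : Icc 1 n = Ioc 0 n := by ext; simp; omega
    have h2 : Icc 1 N = Ioc 0 N := by ext; simp; omega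
    rw [h1, h2, eq_sub_iff_add_eq]
    exact Finset.sum_Ioc_consecutive A (by omega) hn.2
  set G : ℕ → ℂ := fun n => (∑ m ∈ Icc 1 n, B m) * C n with hG
  have step1 : ∑ n ∈ Icc 1 N, (∑ k ∈ Icc 1 n, A k) * (∑ m ∈ Icc 1 n, B m) * C n
      = (∑ k ∈ Icc 1 N, A k) * (∑ n ∈ Icc 1 N, G n)
        - ∑ n ∈ Icc 1 N, (∑ k ∈ Ioc n N, A k) * G n := by
    rw [Finset.mul_sum, ← Finset.sum_sub_distrib]
    apply Finset.sum_congr rfl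
    intro n hn
    rw [hsplitA n hn, hG]
    ring
  rw [step1]
  -- swap the double sum
  have step2 : ∑ n ∈ Icc 1 N, (∑ k ∈ Ioc n N, A k) * G n
      = ∑ k ∈ Icc 1 N, (∑ n ∈ Ico 1 k, G n) * A k := by
    have e1 : Icc 1 N = Ico 1 (N + 1) := by rw [Finset.Ico_add_one_right_eq_Icc]
    have e2 : ∀ n : ℕ, Ioc n N = Ico (n + 1) (N + 1) := by
      intro n; ext; simp
    calc ∑ n ∈ Icc 1 N, (∑ k ∈ Ioc n N, A k) * G n
        = ∑ n ∈ Ico 1 (N + 1), ∑ k ∈ Ico (n + 1) (N + 1), G n * A k := by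
          rw [← e1]
          apply Finset.sum_congr rfl
          intro n _
          rw [← e2, Finset.sum_mul]
          apply Finset.sum_congr rfl
          intro k _
          ring
      _ = ∑ k ∈ Ico 1 (N + 1), ∑ n ∈ Ico 1 k, G n * A k :=
          Finset.sum_Ico_Ico_comm' 1 (N + 1) (fun n k => G n * A k)
      _ = ∑ k ∈ Icc 1 N, (∑ n ∈ Ico 1 k, G n) * A k := by
          rw [← e1]
          apply Finset.sum_congr rfl
          intro k _
          rw [Finset.sum_mul]
  rw [step2]
  -- expand G
  have expand1 : ∑ n ∈ Icc 1 N, G n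
      = ∑ n ∈ Icc 1 N, ((∑ m ∈ Ico 1 n, B m) * C n + B n * C n) := by
    apply Finset.sum_congr rfl
    intro n hn
    simp only [Finset.mem_Icc] at hn
    simp only [hG, hsplitB n hn.1, add_mul]
  have expand2 : ∑ k ∈ Icc 1 N, (∑ n ∈ Ico 1 k, G n) * A k
      = (∑ k ∈ Icc 1 N, (∑ n ∈ Ico 1 k, (∑ m ∈ Ico 1 n, B m) * C n) * A k)
        + (∑ k ∈ Icc 1 N, (∑ n ∈ Ico 1 k, B n * C n) * A k) := by
    rw [← Finset.sum_add_distrib]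
    apply Finset.sum_congr rfl
    intro k _
    rw [← add_mul, ← Finset.sum_add_distrib]
    congr 1
    apply Finset.sum_congr rfl
    intro n hn
    simp only [Finset.mem_Ico] at hn
    simp only [hG, hsplitB n hn.1, add_mul]
  rw [expand1, expand2]
  ring

theorem stmt13 (x x1 x2 : ℂ)
    (hx : IsRootOfUnity x) (hx1 : IsRootOfUnity x1) (hx2 : IsRootOfUnity x2)
    (p1 p2 q : ℕ) (hp1 : 0 < p1) (hp2 : 0 < p2) (hq : 0 < q)
    (h1 : ¬(p1 = 1 ∧ x1 = 1)) (h2 : ¬(q = 1 ∧ x = 1)) :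
    S2 p1 p2 q x1 x2 x
    = -Li3 p2 q p1 x2 x x1 - Li2 (p2 + q) p1 (x2 * x) x1
      + Li p1 x1 * (Li2 p2 q x2 x + Li (p2 + q) (x2 * x)) := by
  have hxn : ‖x‖ = 1 := norm_rou hx
  have hx1n : ‖x1‖ = 1 := norm_rou hx1
  have hx2n : ‖x2‖ = 1 := norm_rou hx2
  have hx2xn : ‖x2 * x‖ = 1 := by rw [norm_mul, hx2n, hxn, one_mul]
  have habs1 : x1 = 1 → 2 ≤ p1 := by
    intro hx1'
    have : p1 ≠ 1 := fun hp => h1 ⟨hp, hx1'⟩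
    omega
  have habsx : x = 1 → 2 ≤ q := by
    intro hx'
    have : q ≠ 1 := fun hp => h2 ⟨hp, hx'⟩
    omega
  have hlog : ∀ n : ℕ, (0:ℝ) ≤ Real.log n := fun n => Real.log_natCast_nonneg n
  have hIcoIcc : ∀ n : ℕ, Ico 1 n ⊆ Icc 1 n := by
    intro n m hm; simp only [Finset.mem_Ico] at hm; simp only [Finset.mem_Icc]; omega
  -- Series 1 : Li p1 x1
  obtain ⟨L1, hL1⟩ : ∃ L, Tendsto (fun N : ℕ => ∑ n ∈ Icc 1 N, x1 ^ n / (n : ℂ) ^ p1)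
      atTop (nhds L) := by
    obtain ⟨L, hL⟩ := master (fun _ => (1:ℂ)) p1 hp1 1
      (fun n hn => by simp only [norm_one]; nlinarith [hlog n])
      (fun n hn => by
        simp only [sub_self, norm_zero]
        have hc : (0:ℝ) ≤ (n:ℝ) := Nat.cast_nonneg n
        have h := Real.log_nonneg (show (1:ℝ) ≤ (n:ℝ)+1 by linarith)
        apply div_nonneg
        · nlinarith
        · positivity)
      x1 hx1n habs1
    exact ⟨L, by simpa using hL⟩
  -- Series 2 : Li (p2+q) (x2*x)
  obtain ⟨Lpq, hLpq⟩ : ∃ L, Tendsto (fun N : ℕ => ∑ n ∈ Icc 1 N, (x2 * x) ^ n / (n : ℂ) ^ (p2 + q))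
      atTop (nhds L) := by
    obtain ⟨L, hL⟩ := master (fun _ => (1:ℂ)) (p2 + q) (by omega) 1
      (fun n hn => by simp only [norm_one]; nlinarith [hlog n])
      (fun n hn => by
        simp only [sub_self, norm_zero]
        have hc : (0:ℝ) ≤ (n:ℝ) := Nat.cast_nonneg n
        have h := Real.log_nonneg (show (1:ℝ) ≤ (n:ℝ)+1 by linarith)
        apply div_nonneg
        · nlinarith
        · positivity)
      (x2 * x) hx2xn (fun _ => by omega)
    exact ⟨L, by simpa using hL⟩
  -- Series 3 : Li2 p2 q x2 x
  obtain ⟨L2a, hL2a⟩ : ∃ L, Tendsto (fun N : ℕ => ∑ n ∈ Icc 1 N,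
      ∑ m ∈ Ico 1 n, x2 ^ m * x ^ n / ((m : ℂ) ^ p2 * (n : ℂ) ^ q)) atTop (nhds L) := by
    obtain ⟨L, hL⟩ := master (fun n => ∑ m ∈ Ico 1 n, x2 ^ m / (m : ℂ) ^ p2) q hq 2
      (fun n hn => by
        have := sum_pow_div_le_log x2 hx2n p2 hp2 n (Ico 1 n) (hIcoIcc n)
        nlinarith [hlog n])
      (fun n hn => by
        have hd : (∑ m ∈ Ico 1 (n + 1), x2 ^ m / (m : ℂ) ^ p2)
            - (∑ m ∈ Ico 1 n, x2 ^ m / (m : ℂ) ^ p2) = x2 ^ n / (n : ℂ) ^ p2 := by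
          rw [Finset.sum_Ico_succ_top hn]; ring
        simp only [hd]
        rw [norm_pow_div x2 hx2n n p2]
        exact step_bound p2 n hp2 hn)
      x hxn habsx
    refine ⟨L, ?_⟩
    have hsh : (fun N : ℕ => ∑ n ∈ Icc 1 N,
        (∑ m ∈ Ico 1 n, x2 ^ m / (m : ℂ) ^ p2) * x ^ n / (n : ℂ) ^ q)
        = (fun N : ℕ => ∑ n ∈ Icc 1 N,
        ∑ m ∈ Ico 1 n, x2 ^ m * x ^ n / ((m : ℂ) ^ p2 * (n : ℂ) ^ q)) := by
      funext N
      apply Finset.sum_congr rfl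
      intro n _
      rw [Finset.sum_mul, Finset.sum_div]
      exact Finset.sum_congr rfl fun m _ => by ring
    rw [← hsh]
    exact hL
  -- bound for partial sums of series 3
  obtain ⟨W, hW⟩ : ∃ W, ∀ N : ℕ, ‖∑ n ∈ Icc 1 N,
      ∑ m ∈ Ico 1 n, x2 ^ m * x ^ n / ((m : ℂ) ^ p2 * (n : ℂ) ^ q)‖ ≤ W := by
    obtain ⟨W, hW⟩ := hL2a.norm.bddAbove_range
    exact ⟨W, fun N => hW (Set.mem_range_self N)⟩
  have hW0 : 0 ≤ W := le_trans (norm_nonneg _) (hW 0)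
  -- Series 4 : Li2 (p2+q) p1 (x2*x) x1
  obtain ⟨L2b, hL2b⟩ : ∃ L, Tendsto (fun N : ℕ => ∑ n ∈ Icc 1 N,
      ∑ m ∈ Ico 1 n, (x2 * x) ^ m * x1 ^ n / ((m : ℂ) ^ (p2 + q) * (n : ℂ) ^ p1))
      atTop (nhds L) := by
    obtain ⟨L, hL⟩ := master (fun n => ∑ m ∈ Ico 1 n, (x2 * x) ^ m / (m : ℂ) ^ (p2 + q))
      p1 hp1 2
      (fun n hn => by
        have := sum_pow_div_le_two (x2 * x) hx2xn (p2 + q) (by omega) n (Ico 1 n) (hIcoIcc n)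
        nlinarith [hlog n])
      (fun n hn => by
        have hd : (∑ m ∈ Ico 1 (n + 1), (x2 * x) ^ m / (m : ℂ) ^ (p2 + q))
            - (∑ m ∈ Ico 1 n, (x2 * x) ^ m / (m : ℂ) ^ (p2 + q))
            = (x2 * x) ^ n / (n : ℂ) ^ (p2 + q) := by
          rw [Finset.sum_Ico_succ_top hn]; ring
        simp only [hd]
        rw [norm_pow_div (x2 * x) hx2xn n (p2 + q)]
        exact step_bound (p2 + q) n (by omega) hn)
      x1 hx1n habs1
    refine ⟨L, ?_⟩
    have hsh : (fun N : ℕ => ∑ n ∈ Icc 1 N,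
        (∑ m ∈ Ico 1 n, (x2 * x) ^ m / (m : ℂ) ^ (p2 + q)) * x1 ^ n / (n : ℂ) ^ p1)
        = (fun N : ℕ => ∑ n ∈ Icc 1 N,
        ∑ m ∈ Ico 1 n, (x2 * x) ^ m * x1 ^ n / ((m : ℂ) ^ (p2 + q) * (n : ℂ) ^ p1)) := by
      funext N
      apply Finset.sum_congr rfl
      intro n _
      rw [Finset.sum_mul, Finset.sum_div]
      exact Finset.sum_congr rfl fun m _ => by ring
    rw [← hsh]
    exact hL
  -- Series 5 : Li3 p2 q p1 x2 x x1
  obtain ⟨L3, hL3⟩ : ∃ L, Tendsto (fun N : ℕ => ∑ n3 ∈ Icc 1 N, ∑ n2 ∈ Ico 1 n3,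
      ∑ n1 ∈ Ico 1 n2, x2 ^ n1 * x ^ n2 * x1 ^ n3
        / ((n1 : ℂ) ^ p2 * (n2 : ℂ) ^ q * (n3 : ℂ) ^ p1)) atTop (nhds L) := by
    have hrel : ∀ n : ℕ, 1 ≤ n →
        (∑ n2 ∈ Ico 1 n, ∑ n1 ∈ Ico 1 n2,
          x2 ^ n1 * x ^ n2 / ((n1 : ℂ) ^ p2 * (n2 : ℂ) ^ q))
        = ∑ n2 ∈ Icc 1 (n - 1), ∑ n1 ∈ Ico 1 n2,
          x2 ^ n1 * x ^ n2 / ((n1 : ℂ) ^ p2 * (n2 : ℂ) ^ q) := by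
      intro n hn
      have hset : Ico 1 n = Icc 1 (n - 1) := by
        ext m; simp only [Finset.mem_Ico, Finset.mem_Icc]; omega
      rw [hset]
    obtain ⟨L, hL⟩ := master (fun n => ∑ n2 ∈ Ico 1 n, ∑ n1 ∈ Ico 1 n2,
        x2 ^ n1 * x ^ n2 / ((n1 : ℂ) ^ p2 * (n2 : ℂ) ^ q)) p1 hp1 (W + 2)
      (fun n hn => by
        simp only [hrel n hn]
        have := hW (n - 1)
        nlinarith [hlog n])
      (fun n hn => by
        have hd : (∑ n2 ∈ Ico 1 (n + 1), ∑ n1 ∈ Ico 1 n2,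
              x2 ^ n1 * x ^ n2 / ((n1 : ℂ) ^ p2 * (n2 : ℂ) ^ q))
            - (∑ n2 ∈ Ico 1 n, ∑ n1 ∈ Ico 1 n2,
              x2 ^ n1 * x ^ n2 / ((n1 : ℂ) ^ p2 * (n2 : ℂ) ^ q))
            = ∑ n1 ∈ Ico 1 n, x2 ^ n1 * x ^ n / ((n1 : ℂ) ^ p2 * (n : ℂ) ^ q) := by
          rw [Finset.sum_Ico_succ_top hn]; ring
        simp only [hd]
        have hi := inner_bound x2 x hx2n hxn p2 q n hp2 hq hn
        have hn1 : (1:ℝ) ≤ (n:ℝ) := by exact_mod_cast hn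
        have hl2 : Real.log (n:ℝ) ≤ Real.log ((n:ℝ) + 1) :=
          Real.log_le_log (by linarith) (by linarith)
        have hl3 : (0:ℝ) ≤ Real.log ((n:ℝ) + 1) := Real.log_nonneg (by linarith)
        calc ‖∑ n1 ∈ Ico 1 n, x2 ^ n1 * x ^ n / ((n1 : ℂ) ^ p2 * (n : ℂ) ^ q)‖
            ≤ (1 + Real.log n) / n := hi
          _ ≤ (W + 2) * (1 + Real.log ((n:ℝ) + 1)) / ((n:ℝ) + 1) := by
              rw [div_le_div_iff₀ (by linarith) (by linarith)]
              have c1 : (1 + Real.log (n:ℝ)) * ((n:ℝ) + 1)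
                  ≤ (1 + Real.log ((n:ℝ) + 1)) * ((n:ℝ) + 1) :=
                mul_le_mul_of_nonneg_right (by linarith) (by linarith)
              have c2 : (1 + Real.log ((n:ℝ) + 1)) * ((n:ℝ) + 1)
                  ≤ (1 + Real.log ((n:ℝ) + 1)) * (2 * (n:ℝ)) :=
                mul_le_mul_of_nonneg_left (by linarith) (by linarith)
              have c3 : 2 * ((1 + Real.log ((n:ℝ) + 1)) * (n:ℝ))
                  ≤ (W + 2) * ((1 + Real.log ((n:ℝ) + 1)) * (n:ℝ)) :=
                mul_le_mul_of_nonneg_right (by linarith)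
                  (mul_nonneg (by linarith) (by linarith))
              nlinarith [c1, c2, c3]
        )
      x1 hx1n habs1
    refine ⟨L, ?_⟩
    have hsh : (fun N : ℕ => ∑ n3 ∈ Icc 1 N,
        (∑ n2 ∈ Ico 1 n3, ∑ n1 ∈ Ico 1 n2,
          x2 ^ n1 * x ^ n2 / ((n1 : ℂ) ^ p2 * (n2 : ℂ) ^ q)) * x1 ^ n3 / (n3 : ℂ) ^ p1)
        = (fun N : ℕ => ∑ n3 ∈ Icc 1 N, ∑ n2 ∈ Ico 1 n3, ∑ n1 ∈ Ico 1 n2,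
          x2 ^ n1 * x ^ n2 * x1 ^ n3 / ((n1 : ℂ) ^ p2 * (n2 : ℂ) ^ q * (n3 : ℂ) ^ p1)) := by
      funext N
      apply Finset.sum_congr rfl
      intro n3 _
      rw [Finset.sum_mul, Finset.sum_div]
      apply Finset.sum_congr rfl
      intro n2 _
      rw [Finset.sum_mul, Finset.sum_div]
      exact Finset.sum_congr rfl fun n1 _ => by ring
    rw [← hsh]
    exact hL
  -- the finite identity
  have main : ∀ N : ℕ, ∑ n ∈ Icc 1 N, zf n p1 x1 * zf n p2 x2 * x ^ n / (n : ℂ) ^ q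
      = (∑ n ∈ Icc 1 N, x1 ^ n / (n : ℂ) ^ p1)
        * ((∑ n ∈ Icc 1 N, ∑ m ∈ Ico 1 n, x2 ^ m * x ^ n / ((m : ℂ) ^ p2 * (n : ℂ) ^ q))
          + (∑ n ∈ Icc 1 N, (x2 * x) ^ n / (n : ℂ) ^ (p2 + q)))
        - (∑ n3 ∈ Icc 1 N, ∑ n2 ∈ Ico 1 n3, ∑ n1 ∈ Ico 1 n2,
            x2 ^ n1 * x ^ n2 * x1 ^ n3 / ((n1 : ℂ) ^ p2 * (n2 : ℂ) ^ q * (n3 : ℂ) ^ p1))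
        - (∑ n ∈ Icc 1 N, ∑ m ∈ Ico 1 n,
            (x2 * x) ^ m * x1 ^ n / ((m : ℂ) ^ (p2 + q) * (n : ℂ) ^ p1)) := by
    intro N
    have hk := key_identity (fun k => x1 ^ k / (k : ℂ) ^ p1)
      (fun m => x2 ^ m / (m : ℂ) ^ p2) (fun n => x ^ n / (n : ℂ) ^ q) N
    have e0 : ∑ n ∈ Icc 1 N, zf n p1 x1 * zf n p2 x2 * x ^ n / (n : ℂ) ^ q
        = ∑ n ∈ Icc 1 N, (∑ k ∈ Icc 1 n, x1 ^ k / (k : ℂ) ^ p1)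
            * (∑ m ∈ Icc 1 n, x2 ^ m / (m : ℂ) ^ p2) * (x ^ n / (n : ℂ) ^ q) := by
      apply Finset.sum_congr rfl
      intro n _
      simp only [zf]
      ring
    have e1 : ∑ n ∈ Icc 1 N,
        ((∑ m ∈ Ico 1 n, x2 ^ m / (m : ℂ) ^ p2) * (x ^ n / (n : ℂ) ^ q)
          + (x2 ^ n / (n : ℂ) ^ p2) * (x ^ n / (n : ℂ) ^ q))
        = (∑ n ∈ Icc 1 N, ∑ m ∈ Ico 1 n, x2 ^ m * x ^ n / ((m : ℂ) ^ p2 * (n : ℂ) ^ q))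
          + (∑ n ∈ Icc 1 N, (x2 * x) ^ n / (n : ℂ) ^ (p2 + q)) := by
      rw [Finset.sum_add_distrib]
      congr 1
      · apply Finset.sum_congr rfl
        intro n _
        rw [Finset.sum_mul]
        exact Finset.sum_congr rfl fun m _ => by ring
      · apply Finset.sum_congr rfl
        intro n _
        rw [mul_pow, pow_add]
        ring
    have e2 : ∑ k ∈ Icc 1 N, (∑ n ∈ Ico 1 k,
          (∑ m ∈ Ico 1 n, x2 ^ m / (m : ℂ) ^ p2) * (x ^ n / (n : ℂ) ^ q))
          * (x1 ^ k / (k : ℂ) ^ p1)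
        = ∑ n3 ∈ Icc 1 N, ∑ n2 ∈ Ico 1 n3, ∑ n1 ∈ Ico 1 n2,
            x2 ^ n1 * x ^ n2 * x1 ^ n3 / ((n1 : ℂ) ^ p2 * (n2 : ℂ) ^ q * (n3 : ℂ) ^ p1) := by
      apply Finset.sum_congr rfl
      intro k _
      rw [Finset.sum_mul]
      apply Finset.sum_congr rfl
      intro n _
      rw [Finset.sum_mul, Finset.sum_mul]
      exact Finset.sum_congr rfl fun m _ => by ring
    have e3 : ∑ k ∈ Icc 1 N, (∑ n ∈ Ico 1 k,
          (x2 ^ n / (n : ℂ) ^ p2) * (x ^ n / (n : ℂ) ^ q)) * (x1 ^ k / (k : ℂ) ^ p1)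
        = ∑ n ∈ Icc 1 N, ∑ m ∈ Ico 1 n,
            (x2 * x) ^ m * x1 ^ n / ((m : ℂ) ^ (p2 + q) * (n : ℂ) ^ p1) := by
      apply Finset.sum_congr rfl
      intro k _
      rw [Finset.sum_mul]
      apply Finset.sum_congr rfl
      intro n _
      rw [mul_pow, pow_add]
      ring
    rw [e0, hk, e1, e2, e3]
  -- put everything together
  have hT : Tendsto (fun N => ∑ n ∈ Icc 1 N, zf n p1 x1 * zf n p2 x2 * x ^ n / (n : ℂ) ^ q)
      atTop (nhds (L1 * (L2a + Lpq) - L3 - L2b)) := by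
    have := ((hL1.mul (hL2a.add hLpq)).sub hL3).sub hL2b
    apply this.congr
    intro N
    exact (main N).symm
  have eS2 : S2 p1 p2 q x1 x2 x = L1 * (L2a + Lpq) - L3 - L2b := by
    simp only [S2]
    exact hT.limUnder_eq
  have eLi1 : Li p1 x1 = L1 := by simp only [Li]; exact hL1.limUnder_eq
  have eLipq : Li (p2 + q) (x2 * x) = Lpq := by simp only [Li]; exact hLpq.limUnder_eq
  have eLi2a : Li2 p2 q x2 x = L2a := by simp only [Li2]; exact hL2a.limUnder_eq
  have eLi2b : Li2 (p2 + q) p1 (x2 * x) x1 = L2b := by simp only [Li2]; exact hL2b.limUnder_eq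
  have eLi3 : Li3 p2 q p1 x2 x x1 = L3 := by simp only [Li3]; exact hL3.limUnder_eq
  rw [eS2, eLi1, eLipq, eLi2a, eLi2b, eLi3]
  ring
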